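/- Let k ≥ 2 and let H = (V,E) be a finite k-uniform linear hypergraph with n = |V| vertices satisfying n ≤ k² + k − 2. Then the chromatic index of H satisfies q(H) ≤ Δ([H]_2) + 1. -/

import Mathlib

open Finset

variable {V : Type*}

/-- The degree of a vertex `x`: number of hyperedges containing `x`. -/
def hyperDeg [DecidableEq V] (E : Finset (Finset V)) (x : V) : ℕ :=
  (E.filter fun e => x ∈ e).card

/-- A hypergraph is linear if two distinct hyperedges share at most one vertex. -/
def Linear [DecidableEq V] (E : Finset (Finset V)) : Prop :=
  ∀ e ∈ E, ∀ f ∈ E, e ≠ f → (e ∩ f).card ≤ 1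

/-- The degree of a hyperedge `e`: number of other hyperedges meeting `e`. -/
def edgeDeg [DecidableEq V] (E : Finset (Finset V)) (e : Finset V) : ℕ :=
  (E.filter fun a => a ≠ e ∧ (a ∩ e).Nonempty).card

/-- Degree of a vertex in the 2-section of the hypergraph. -/
def deg2 [Fintype V] [DecidableEq V] (E : Finset (Finset V)) (x : V) : ℕ :=
  (Finset.univ.filter fun y => y ≠ x ∧ ∃ e ∈ E, x ∈ e ∧ y ∈ e).card

/-- Maximum degree of the 2-section. -/
def maxDeg2 [Fintype V] [DecidableEq V] (E : Finset (Finset V)) : ℕ :=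
  Finset.univ.sup (deg2 E)

/-- Minimum degree of the 2-section. -/
noncomputable def minDeg2 [Fintype V] [DecidableEq V] (E : Finset (Finset V)) : ℕ :=
  sInf (Set.range (deg2 E))

/-- Maximum vertex degree of the hypergraph. -/
def maxDeg [Fintype V] [DecidableEq V] (E : Finset (Finset V)) : ℕ :=
  Finset.univ.sup (hyperDeg E)

/-- A proper hyperedge coloring with `q` colors. -/
def ColorableWith [DecidableEq V] (E : Finset (Finset V)) (q : ℕ) : Prop :=
  ∃ c : Finset V → Fin q, ∀ e ∈ E, ∀ f ∈ E, e ≠ f → (e ∩ f).Nonempty → c e ≠ c f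

/-- The chromatic index: least number of colors in a proper hyperedge coloring. -/
noncomputable def chromIndex [DecidableEq V] (E : Finset (Finset V)) : ℕ :=
  sInf {q | ColorableWith E q}

/-! If some edge meets at most `Δ = maxDeg2 E` other edges, delete it, colour the rest by
induction (`Δ` does not grow) and give it a free colour. Otherwise every edge meets more than `Δ`
others. In a linear `k`-uniform hypergraph `deg₂ x = d(x) (k - 1)`, and the bound on `n` forces
`d(x) ≤ k + 1`; comparing `edgeDeg e ≤ ∑_{x ∈ e} (d(x) - 1)` with `Δ` then shows that every covered
vertex has degree exactly `k + 1`. Double counting makes the number of covered vertices a multiple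
of `k` in `[k², k² + k)`, hence `k²`, so any two covered vertices are collinear: `H` is an affine
plane of order `k`. By Playfair's axiom its `k + 1` parallel classes are matchings, which colour
`H` with `k + 1 ≤ Δ + 1` colours. -/

section

variable [DecidableEq V] {E : Finset (Finset V)} {k q : ℕ}

theorem ColorableWith.mono {q' : ℕ} (h : q ≤ q') (hc : ColorableWith E q) :
    ColorableWith E q' := by
  obtain ⟨c, hc⟩ := hc
  exact ⟨fun f => Fin.castLE h (c f), fun e he f hf hne hint heq =>
    hc e he f hf hne hint (Fin.castLE_injective h heq)⟩

theorem colorableWith_card_of_matchings {β : Type*} (T : Finset β) (hT : T.Nonempty)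
    (R : β → Finset V → Prop) (hcover : ∀ f ∈ E, ∃ t ∈ T, R t f)
    (hmatch : ∀ t ∈ T, ∀ f ∈ E, ∀ g ∈ E, R t f → R t g → f ≠ g → Disjoint f g) :
    ColorableWith E T.card := by
  have : ∀ f, ∃ i : Fin T.card, f ∈ E → R (T.equivFin.symm i) f := by
    intro f
    by_cases hf : f ∈ E
    · obtain ⟨t, ht, hR⟩ := hcover f hf
      exact ⟨T.equivFin ⟨t, ht⟩, fun _ => by simpa using hR⟩
    · exact ⟨⟨0, T.card_pos.2 hT⟩, fun h => absurd h hf⟩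
  choose c hc using this
  refine ⟨c, fun f hf g hg hne hint heq => ?_⟩
  exact hint.not_disjoint
    (hmatch _ (T.equivFin.symm (c f)).2 f hf g hg (hc f hf) (heq ▸ hc g hg) hne)

theorem ColorableWith.of_erase {e : Finset V} (he : e ∈ E) (hc : ColorableWith (E.erase e) q)
    (hdeg : edgeDeg E e < q) : ColorableWith E q := by
  obtain ⟨c, hc⟩ := hc
  obtain ⟨col, hcol⟩ : ∃ col, col ∉ (E.filter fun a => a ≠ e ∧ (a ∩ e).Nonempty).image c := by
    by_contra! h
    have := card_le_card (fun i (_ : i ∈ univ) => h i)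
    rw [card_univ, Fintype.card_fin] at this
    exact absurd (this.trans card_image_le) (not_le.2 hdeg)
  refine ⟨Function.update c e col, fun f hf g hg hfg hint => ?_⟩
  have key : ∀ a ∈ E, a ≠ e → (a ∩ e).Nonempty → col ≠ c a := fun a ha hae hint h =>
    hcol (mem_image.2 ⟨a, mem_filter.2 ⟨ha, hae, hint⟩, h.symm⟩)
  rcases eq_or_ne f e with rfl | hfe <;> rcases eq_or_ne g f with rfl | hge
  · exact absurd rfl hfg
  · simpa [hge] using key g hg hge (inter_comm f g ▸ hint)
  · exact absurd rfl hfg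
  rcases eq_or_ne g e with rfl | hge'
  · simpa [hfe] using (key f hf hfe hint).symm
  · simpa [hfe, hge'] using hc f (mem_erase.2 ⟨hfe, hf⟩) g (mem_erase.2 ⟨hge', hg⟩) hfg hint

theorem Linear.inter_eq_singleton (hlin : Linear E) {a b : Finset V} (ha : a ∈ E) (hb : b ∈ E)
    (hab : a ≠ b) {x : V} (hxa : x ∈ a) (hxb : x ∈ b) : a ∩ b = {x} :=
  eq_singleton_iff_unique_mem.2 ⟨mem_inter.2 ⟨hxa, hxb⟩, fun _ hy =>
    card_le_one.1 (hlin a ha b hb hab) _ hy _ (mem_inter.2 ⟨hxa, hxb⟩)⟩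

theorem edgeDeg_add_card_le_sum_hyperDeg {e : Finset V} (he : e ∈ E) :
    edgeDeg E e + e.card ≤ ∑ x ∈ e, hyperDeg E x := by
  have hsub : E.filter (fun a => a ≠ e ∧ (a ∩ e).Nonempty) ⊆
      e.biUnion fun x => (E.filter (x ∈ ·)).erase e := by
    intro a ha
    obtain ⟨haE, hae, y, hy⟩ := mem_filter.1 ha
    exact mem_biUnion.2 ⟨y, (mem_inter.1 hy).2,
      mem_erase.2 ⟨hae, mem_filter.2 ⟨haE, (mem_inter.1 hy).1⟩⟩⟩
  calc edgeDeg E e + e.card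
      ≤ ∑ x ∈ e, ((E.filter (x ∈ ·)).erase e).card + ∑ x ∈ e, 1 := by
        rw [card_eq_sum_ones e]
        exact Nat.add_le_add_right ((card_le_card hsub).trans card_biUnion_le) _
    _ = ∑ x ∈ e, hyperDeg E x := by
        rw [← sum_add_distrib]
        refine sum_congr rfl fun x hx => ?_
        exact card_erase_add_one (mem_filter.2 ⟨he, hx⟩)

theorem deg2_eq_card_biUnion [Fintype V] (E : Finset (Finset V)) (x : V) :
    deg2 E x = ((E.filter (x ∈ ·)).biUnion (·.erase x)).card := by
  unfold deg2
  congr 1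
  ext y
  simp only [mem_filter, mem_univ, true_and, mem_biUnion, mem_erase]
  constructor
  · rintro ⟨hy, e, he, hxe, hye⟩
    exact ⟨e, ⟨he, hxe⟩, hy, hye⟩
  · rintro ⟨e, ⟨he, hxe⟩, hy, hye⟩
    exact ⟨hy, e, he, hxe, hye⟩

/-- The edges through `x`, with `x` removed, partition the 2-section neighbourhood of `x`. -/
theorem Linear.deg2_eq [Fintype V] (hlin : Linear E) (huni : ∀ e ∈ E, e.card = k) (x : V) :
    deg2 E x = hyperDeg E x * (k - 1) := by
  rw [deg2_eq_card_biUnion, card_biUnion]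
  · rw [sum_congr rfl fun a ha => ?_, sum_const, smul_eq_mul]
    · rfl
    · obtain ⟨haE, hxa⟩ := mem_filter.1 ha
      rw [card_erase_of_mem hxa, huni a haE]
  · intro a ha b hb hab
    obtain ⟨haE, hxa⟩ := mem_filter.1 ha
    obtain ⟨hbE, hxb⟩ := mem_filter.1 hb
    rw [Function.onFun, disjoint_iff_inter_eq_empty, erase_inter, inter_erase, erase_idem,
      hlin.inter_eq_singleton haE hbE hab hxa hxb, erase_singleton]

theorem deg2_lt_card [Fintype V] (E : Finset (Finset V)) (x : V) : deg2 E x < Fintype.card V :=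
  card_lt_univ_of_notMem (x := x) (by simp)

theorem deg2_le_maxDeg2 [Fintype V] (E : Finset (Finset V)) (x : V) : deg2 E x ≤ maxDeg2 E :=
  le_sup (mem_univ x)

theorem maxDeg2_mono [Fintype V] {E' : Finset (Finset V)} (h : E' ⊆ E) :
    maxDeg2 E' ≤ maxDeg2 E := by
  refine sup_mono_fun fun x _ => card_le_card (monotone_filter_right _ ?_)
  rintro y - ⟨hyx, e, he, hxe, hye⟩
  exact ⟨hyx, e, h he, hxe, hye⟩

theorem Linear.hyperDeg_eq_of_maxDeg2_lt_edgeDeg [Fintype V] (hlin : Linear E)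
    (huni : ∀ e ∈ E, e.card = k) (hdeg : ∀ x, hyperDeg E x ≤ k + 1) {e : Finset V} (he : e ∈ E)
    (hbad : maxDeg2 E < edgeDeg E e) : ∀ x ∈ e, hyperDeg E x = k + 1 := by
  intro x hx
  have hsum := edgeDeg_add_card_le_sum_hyperDeg he
  rw [huni e he] at hsum
  obtain ⟨m, rfl⟩ : ∃ m, k = m + 1 := ⟨k - 1, by have := huni e he ▸ card_pos.2 ⟨x, hx⟩; omega⟩
  have hdeg2 : ∀ y, hyperDeg E y * m < edgeDeg E e := fun y => by
    simpa [hlin.deg2_eq huni] using (deg2_le_maxDeg2 E y).trans_lt hbad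
  obtain ⟨z, hz, hzmax⟩ := exists_max_image e (hyperDeg E) ⟨x, hx⟩
  have hz_top : hyperDeg E z = m + 2 := by
    have := sum_le_card_nsmul e (hyperDeg E) _ hzmax
    rw [huni e he, smul_eq_mul] at this
    have := hdeg2 z
    have := hdeg z
    nlinarith
  have hrest := sum_le_card_nsmul (e.erase x) (hyperDeg E) _ fun y _ => hdeg y
  rw [card_erase_of_mem hx, huni e he, Nat.add_sub_cancel, smul_eq_mul] at hrest
  rw [← add_sum_erase e _ hx] at hsum
  have := hz_top ▸ hdeg2 z
  have := hdeg x
  nlinarith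

theorem sum_hyperDeg_eq_sum_card (E : Finset (Finset V)) :
    ∑ x ∈ E.biUnion id, hyperDeg E x = ∑ e ∈ E, e.card := by
  refine (sum_card_bipartiteAbove_eq_sum_card_bipartiteBelow (· ∈ ·)).trans
    (sum_congr rfl fun e he => congrArg card ?_)
  rw [bipartiteBelow, filter_mem_eq_inter, inter_eq_right]
  exact subset_biUnion_of_mem id he

def PairwiseCollinear (E : Finset (Finset V)) : Prop :=
  ∀ p w, p ≠ w → (∃ a ∈ E, p ∈ a) → (∃ b ∈ E, w ∈ b) → ∃ c ∈ E, p ∈ c ∧ w ∈ c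

theorem Linear.pairwiseCollinear_of_hyperDeg_eq [Fintype V] (hlin : Linear E)
    (huni : ∀ e ∈ E, e.card = k) (hreg : ∀ e ∈ E, ∀ x ∈ e, hyperDeg E x = k + 1)
    (hV : Fintype.card V < k * (k + 1)) : PairwiseCollinear E := by
  intro p w hpw hp hw
  set S := E.biUnion id
  have hmemS : ∀ {x}, x ∈ S ↔ ∃ a ∈ E, x ∈ a := by simp [S]
  obtain ⟨a, haE, hpa⟩ := hp
  obtain ⟨m, rfl⟩ : ∃ m, k = m + 1 := ⟨k - 1, by have := huni a haE ▸ card_pos.2 ⟨p, hpa⟩; omega⟩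
  have hcount : S.card * (m + 1 + 1) = E.card * (m + 1) := by
    have := sum_hyperDeg_eq_sum_card E
    rwa [sum_congr rfl fun x hx => (hmemS.1 hx).elim fun b ⟨hb, hxb⟩ => hreg b hb x hxb,
      sum_congr rfl huni, sum_const, sum_const, smul_eq_mul, smul_eq_mul] at this
  obtain ⟨j, hj⟩ : m + 1 ∣ S.card :=
    (Nat.coprime_self_add_right.2 (Nat.coprime_one_right _)).dvd_of_dvd_mul_right
      ⟨E.card, by rw [hcount, mul_comm]⟩
  set N := insert p (univ.filter fun y => y ≠ p ∧ ∃ e ∈ E, p ∈ e ∧ y ∈ e)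
  have hNS : N ⊆ S := by
    intro y hy
    rcases mem_insert.1 hy with rfl | hy
    · exact hmemS.2 ⟨a, haE, hpa⟩
    · obtain ⟨-, -, e, he, -, hye⟩ := mem_filter.1 hy
      exact hmemS.2 ⟨e, he, hye⟩
  have hNcard : N.card = (m + 1) * (m + 1) := by
    rw [card_insert_of_notMem (by simp)]
    change deg2 E p + 1 = _
    rw [hlin.deg2_eq huni, hreg a haE p hpa]
    simp only [Nat.add_sub_cancel]
    ring
  have hSN : S ⊆ N := by
    refine (eq_of_subset_of_card_le hNS ?_).ge
    have h1 := hNcard ▸ card_le_card hNS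
    have h2 := (card_le_univ S).trans_lt hV
    rw [hj] at h1 h2
    rw [hNcard, hj, le_antisymm (Nat.le_of_lt_succ (Nat.lt_of_mul_lt_mul_left h2))
      (Nat.le_of_mul_le_mul_left h1 m.succ_pos)]
  obtain ⟨b, hbE, hwb⟩ := hw
  rcases mem_insert.1 (hSN (hmemS.2 ⟨b, hbE, hwb⟩)) with rfl | hwN
  · exact absurd rfl hpw
  · obtain ⟨-, -, c, hc, hpc, hwc⟩ := mem_filter.1 hwN
    exact ⟨c, hc, hpc, hwc⟩

theorem Linear.card_filter_not_disjoint (hlin : Linear E)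
    (hcol : PairwiseCollinear E)
    {h : Finset V} (hh : h ∈ E) {p : V} (hp : ∃ a ∈ E, p ∈ a) (hph : p ∉ h) :
    ((E.filter (p ∈ ·)).filter fun a => ¬Disjoint a h).card = h.card := by
  have hmem : ∀ {a}, a ∈ (E.filter (p ∈ ·)).filter (fun a => ¬Disjoint a h) ↔
      a ∈ E ∧ p ∈ a ∧ ∃ x ∈ a, x ∈ h := by
    simp [not_disjoint_iff, and_assoc]
  have hne : ∀ {a}, p ∈ a → a ≠ h := fun hpa hah => hph (hah ▸ hpa)
  refine card_bij (fun a ha => (hmem.1 ha).2.2.choose) (fun a ha => (hmem.1 ha).2.2.choose_spec.2)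
    (fun a₁ ha₁ a₂ ha₂ heq => ?_) (fun w hw => ?_)
  · obtain ⟨ha₁E, hpa₁, -⟩ := hmem.1 ha₁
    obtain ⟨ha₂E, hpa₂, -⟩ := hmem.1 ha₂
    have hx₁ := (hmem.1 ha₁).2.2.choose_spec
    have hx₂ := (hmem.1 ha₂).2.2.choose_spec
    by_contra hne'
    have := hlin.inter_eq_singleton ha₁E ha₂E hne' hpa₁ hpa₂ ▸ mem_inter.2 ⟨hx₁.1, heq ▸ hx₂.1⟩
    exact hph (mem_singleton.1 this ▸ hx₁.2)
  · obtain ⟨c, hc, hpc, hwc⟩ := hcol p w (fun hpw => hph (hpw ▸ hw)) hp ⟨h, hh, hw⟩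
    have hcmem := hmem.2 ⟨hc, hpc, w, hwc, hw⟩
    refine ⟨c, hcmem, ?_⟩
    have hx := (hmem.1 hcmem).2.2.choose_spec
    exact mem_singleton.1 (hlin.inter_eq_singleton hc hh (hne hpc) hwc hw ▸ mem_inter.2 hx)

/-- Playfair's axiom. -/
theorem Linear.card_filter_disjoint_eq_one (hlin : Linear E) (huni : ∀ e ∈ E, e.card = k)
    (hreg : ∀ e ∈ E, ∀ x ∈ e, hyperDeg E x = k + 1)
    (hcol : PairwiseCollinear E)
    {h : Finset V} (hh : h ∈ E) {p : V} (hp : ∃ a ∈ E, p ∈ a) (hph : p ∉ h) :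
    ((E.filter (p ∈ ·)).filter fun a => Disjoint a h).card = 1 := by
  have := card_filter_add_card_filter_not (s := E.filter (p ∈ ·)) fun a => Disjoint a h
  obtain ⟨a, haE, hpa⟩ := hp
  rw [hlin.card_filter_not_disjoint hcol hh ⟨a, haE, hpa⟩ hph, huni h hh] at this
  change _ + k = hyperDeg E p at this
  rw [hreg a haE p hpa] at this
  omega

theorem Linear.colorableWith_succ_of_pairwiseCollinear (hlin : Linear E)
    (huni : ∀ e ∈ E, e.card = k)
    (hreg : ∀ e ∈ E, ∀ x ∈ e, hyperDeg E x = k + 1)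
    (hcol : PairwiseCollinear E) : ColorableWith E (k + 1) := by
  by_cases hcov : ∃ x₀, ∃ a ∈ E, x₀ ∈ a
  swap
  · push Not at hcov
    exact ⟨fun _ => 0, fun e he _ _ _ ⟨x, hx⟩ _ => hcov x e he (mem_inter.1 hx).1⟩
  obtain ⟨x₀, a₀, ha₀, hx₀⟩ := hcov
  have hT : (E.filter (x₀ ∈ ·)).card = k + 1 := hreg a₀ ha₀ x₀ hx₀
  rw [← hT]
  refine colorableWith_card_of_matchings _ ⟨a₀, mem_filter.2 ⟨ha₀, hx₀⟩⟩
    (fun t f => t = f ∨ Disjoint t f) (fun f hf => ?_) (fun t ht f hf g hg htf htg hfg => ?_)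
  · by_cases hx₀f : x₀ ∈ f
    · exact ⟨f, mem_filter.2 ⟨hf, hx₀f⟩, Or.inl rfl⟩
    · have := hlin.card_filter_disjoint_eq_one huni hreg hcol hf ⟨a₀, ha₀, hx₀⟩ hx₀f
      obtain ⟨t, ht⟩ := card_pos.1 (this ▸ one_pos)
      obtain ⟨ht, htf⟩ := mem_filter.1 ht
      exact ⟨t, ht, Or.inr htf⟩
  rcases htf with rfl | htf <;> rcases htg with rfl | htg
  · exact absurd rfl hfg
  · exact htg
  · exact htf.symm
  rw [disjoint_left]
  intro p hpf hpg
  have hpt : p ∉ t := disjoint_right.1 htf hpf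
  have hpar :=
    hlin.card_filter_disjoint_eq_one huni hreg hcol (mem_filter.1 ht).1 ⟨f, hf, hpf⟩ hpt
  exact hfg (card_le_one.1 hpar.le
    f (mem_filter.2 ⟨mem_filter.2 ⟨hf, hpf⟩, htf.symm⟩)
    g (mem_filter.2 ⟨mem_filter.2 ⟨hg, hpg⟩, htg.symm⟩))

theorem Linear.hyperDeg_le_of_card_le [Fintype V] (hlin : Linear E) (huni : ∀ e ∈ E, e.card = k)
    (hk : 2 ≤ k) (hV : Fintype.card V ≤ k ^ 2 + k - 2) (x : V) : hyperDeg E x ≤ k + 1 := by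
  have := hlin.deg2_eq huni x ▸ deg2_lt_card E x
  obtain ⟨m, rfl⟩ : ∃ m, k = m + 2 := ⟨k - 2, by omega⟩
  have hV' : Fintype.card V ≤ (m + 4) * (m + 1) := by
    convert hV using 1
    simp only [Nat.add_sub_cancel, show (m + 2) ^ 2 + (m + 2) = (m + 4) * (m + 1) + 2 by ring]
  have := Nat.lt_of_mul_lt_mul_right (this.trans_le hV')
  omega

theorem Linear.colorableWith_of_forall_maxDeg2_lt_edgeDeg [Fintype V] (hlin : Linear E)
    (huni : ∀ e ∈ E, e.card = k) (hk : 2 ≤ k) (hV : Fintype.card V ≤ k ^ 2 + k - 2)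
    (hbad : ∀ e ∈ E, maxDeg2 E < edgeDeg E e) : ColorableWith E (maxDeg2 E + 1) := by
  rcases E.eq_empty_or_nonempty with rfl | ⟨a, ha⟩
  · exact ⟨fun _ => 0, by simp⟩
  obtain ⟨x, hx⟩ : a.Nonempty := card_pos.1 (by rw [huni a ha]; omega)
  have hreg : ∀ e ∈ E, ∀ x ∈ e, hyperDeg E x = k + 1 := fun e he =>
    hlin.hyperDeg_eq_of_maxDeg2_lt_edgeDeg huni (hlin.hyperDeg_le_of_card_le huni hk hV) he
      (hbad e he)
  have hcol := hlin.pairwiseCollinear_of_hyperDeg_eq huni hreg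
    (hV.trans_lt (by rw [show k * (k + 1) = k ^ 2 + k by ring]; omega))
  refine (hlin.colorableWith_succ_of_pairwiseCollinear huni hreg hcol).mono (Nat.succ_le_succ ?_)
  calc k ≤ (k + 1) * (k - 1) := k.le_succ.trans (Nat.le_mul_of_pos_right _ (by omega))
    _ = deg2 E x := by rw [hlin.deg2_eq huni, hreg a ha x hx]
    _ ≤ maxDeg2 E := deg2_le_maxDeg2 E x

theorem colorableWith_maxDeg2_add_one [Fintype V] (hk : 2 ≤ k)
    (hV : Fintype.card V ≤ k ^ 2 + k - 2) (E : Finset (Finset V)) (hlin : Linear E)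
    (huni : ∀ e ∈ E, e.card = k) : ColorableWith E (maxDeg2 E + 1) := by
  induction E using Finset.strongInduction with
  | H E ih =>
  by_cases hgood : ∃ e ∈ E, edgeDeg E e ≤ maxDeg2 E
  · obtain ⟨e, he, hde⟩ := hgood
    have hsub : E.erase e ⊆ E := erase_subset e E
    have hcol := ih _ (erase_ssubset he) (fun a ha b hb => hlin a (hsub ha) b (hsub hb))
      fun a ha => huni a (hsub ha)
    exact (hcol.mono (Nat.succ_le_succ (maxDeg2_mono hsub))).of_erase he (Nat.lt_succ_of_le hde)
  · push Not at hgood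
    exact hlin.colorableWith_of_forall_maxDeg2_lt_edgeDeg huni hk hV hgood

end

theorem stmt18 {V : Type*} [Fintype V] [DecidableEq V] (k : ℕ) (hk : 2 ≤ k)
    (E : Finset (Finset V)) (n : ℕ) (hn : n = Fintype.card V)
    (hlin : Linear E) (huni : ∀ e ∈ E, e.card = k)
    (hle : n ≤ k ^ 2 + k - 2) :
    chromIndex E ≤ maxDeg2 E + 1 :=
  Nat.sInf_le (colorableWith_maxDeg2_add_one hk (hn ▸ hle) E hlin huni)
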